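/- Let S be a finite metric state space with kernels P^π, P̂^π, reward R^π, terminal value V̄, and γ ∈ [0,1). Suppose each (H−h−1)-step model-based value V̂_{P̂,H−h−1} is K-Lipschitz. Then for each 0 ≤ h ≤ H−1, |U_h(s) − U_{h+1}(s)| ≤ K · γ^{h+1} · E_{s_h∼P_h^π(s)}[W(P^π(·|s_h), P̂^π(·|s_h))], where W is the Wasserstein-1 distance on distributions over S. -/

import Mathlib

/-!
Writing `V_m` for the `m`-step model-based value under `P̂`, the interpolant is
`U_h(s) = Σ_{t<h} γ^t E_{P_t(s)}[R] + γ^h E_{P_h(s)}[V_{H-h}]`. Unrolling one step of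
`V_{H-h} = R + γ P̂ V_{H-h-1}` in `U_h` and one step of `P_{h+1} = P_h P` in `U_{h+1}` shows
`U_h(s) - U_{h+1}(s) = γ^{h+1} E_{s_h∼P_h(s)}[(P̂ - P)(·|s_h) V_{H-h-1}]`, and each inner difference
is at most `K · W(P(·|s_h), P̂(·|s_h))` because `V_{H-h-1} / K` is a 1-Lipschitz test function in
the dual definition of `W`.
-/

open Finset

/-- `p` is a probability distribution on the finite set `S`. -/
def IsDist {S : Type*} [Fintype S] (p : S → ℝ) : Prop :=
  (∀ s, 0 ≤ p s) ∧ ∑ s, p s = 1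

/-- Expectation of `f` under the distribution `p`. -/
noncomputable def expect {S : Type*} [Fintype S] (p f : S → ℝ) : ℝ := ∑ s, p s * f s

/-- `iterK P t s s'` is the `t`-step transition probability of reaching `s'` from `s`
under the Markov kernel `P` (with `iterK P 0` the point mass). -/
noncomputable def iterK {S : Type*} [Fintype S] [DecidableEq S]
    (P : S → S → ℝ) : ℕ → S → S → ℝ
  | 0, s, s' => if s' = s then 1 else 0
  | (t+1), s, s' => ∑ u, P s u * iterK P t u s'

/-- The `H`-step model-based value:
`V̂_{Q,H}(s) = Σ_{t<H} γ^t E_{s_t∼Q_t(s)}[R(s_t)] + γ^H E_{s_H∼Q_H(s)}[V̄(s_H)]`. -/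
noncomputable def mbValue {S : Type*} [Fintype S] [DecidableEq S]
    (γ : ℝ) (R Vbar : S → ℝ) (Q : S → S → ℝ) (H : ℕ) (s : S) : ℝ :=
  ∑ t ∈ Finset.range H, γ ^ t * expect (iterK Q t s) R
    + γ ^ H * expect (iterK Q H s) Vbar

/-- The interpolant `U_h`: the `H`-step value expansion that rolls out the true kernel `P`
for the first `h` steps and the approximate kernel `Phat` for the remaining `H − h` steps. -/
noncomputable def interp {S : Type*} [Fintype S] [DecidableEq S]
    (γ : ℝ) (R Vbar : S → ℝ) (P Phat : S → S → ℝ) (H h : ℕ) (s : S) : ℝ :=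
  ∑ t ∈ Finset.range h, γ ^ t * expect (iterK P t s) R
    + ∑ t ∈ Finset.Ico h H, γ ^ t * ∑ s', iterK P h s s' * expect (iterK Phat (t - h) s') R
    + γ ^ H * ∑ s', iterK P h s s' * expect (iterK Phat (H - h) s') Vbar

/-- Wasserstein-1 distance in Kantorovich–Rubinstein dual form. -/
noncomputable def wass {S : Type*} [Fintype S] [MetricSpace S] (p q : S → ℝ) : ℝ :=
  ⨆ f : {f : S → ℝ // LipschitzWith 1 f}, (expect p f.1 - expect q f.1)

section Expectation

variable {S : Type*} [Fintype S]

theorem expect_add (p f g : S → ℝ) :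
    expect p (fun u => f u + g u) = expect p f + expect p g := by
  simp only [_root_.expect, mul_add, sum_add_distrib]

theorem expect_sub (p f g : S → ℝ) :
    expect p (fun u => f u - g u) = expect p f - expect p g := by
  simp only [_root_.expect, mul_sub, sum_sub_distrib]

theorem expect_neg (p f : S → ℝ) : expect p (-f) = -expect p f := by
  simp only [_root_.expect, Pi.neg_apply, mul_neg, sum_neg_distrib]

theorem expect_const_mul (p f : S → ℝ) (c : ℝ) :
    expect p (fun u => c * f u) = c * expect p f := by
  simp only [_root_.expect, mul_sum, mul_left_comm]

theorem expect_finsetSum {ι : Type*} (p : S → ℝ) (s : Finset ι) (g : ι → S → ℝ) :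
    expect p (fun u => ∑ i ∈ s, g i u) = ∑ i ∈ s, expect p (g i) := by
  simp only [_root_.expect, mul_sum]
  exact sum_comm

theorem expect_bind (p : S → ℝ) (k : S → S → ℝ) (f : S → ℝ) :
    expect (fun v => ∑ u, p u * k u v) f = expect p (fun u => expect (k u) f) := by
  simp only [_root_.expect, sum_mul, mul_sum, mul_assoc]
  exact sum_comm

theorem expect_mono {p f g : S → ℝ} (hp : ∀ u, 0 ≤ p u) (hfg : ∀ u, f u ≤ g u) :
    expect p f ≤ expect p g :=
  sum_le_sum fun u _ => mul_le_mul_of_nonneg_left (hfg u) (hp u)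

theorem abs_expect_le {p : S → ℝ} (hp : ∀ u, 0 ≤ p u) (f : S → ℝ) :
    |expect p f| ≤ expect p (fun u => |f u|) := by
  refine (abs_sum_le_sum_abs _ _).trans_eq (sum_congr rfl fun u _ => ?_)
  rw [abs_mul, abs_of_nonneg (hp u)]

namespace IsDist

variable {p q : S → ℝ}

theorem nonempty (hp : IsDist p) : Nonempty S := by
  by_contra h
  simpa [not_nonempty_iff.mp h] using hp.2

theorem expect_const (hp : IsDist p) (c : ℝ) : expect p (fun _ => c) = c := by
  rw [_root_.expect, ← sum_mul, hp.2, one_mul]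

theorem eq_of_subsingleton [Subsingleton S] (hp : IsDist p) (hq : IsDist q) : p = q := by
  funext x
  rw [← Fintype.sum_subsingleton p x, ← Fintype.sum_subsingleton q x, hp.2, hq.2]

end IsDist

end Expectation

section Kernel

variable {S : Type*} [Fintype S] [DecidableEq S] (P : S → S → ℝ)

theorem iterK_nonneg {P : S → S → ℝ} (hP : ∀ s, IsDist (P s)) (t : ℕ) (s s' : S) :
    0 ≤ iterK P t s s' := by
  induction t generalizing s with
  | zero => simp only [iterK]; positivity
  | succ t ih => exact sum_nonneg fun u _ => mul_nonneg ((hP s).1 u) (ih u)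

theorem iterK_succ' (t : ℕ) (s s' : S) :
    iterK P (t + 1) s s' = ∑ u, iterK P t s u * P u s' := by
  induction t generalizing s with
  | zero => simp [iterK, ite_mul]
  | succ t ih =>
    simp only [iterK] at ih ⊢
    simp only [ih, mul_sum, sum_mul, mul_assoc]
    exact sum_comm

theorem expect_iterK_zero (f : S → ℝ) (s : S) : expect (iterK P 0 s) f = f s := by
  simp [_root_.expect, iterK, ite_mul]

theorem expect_iterK_succ (f : S → ℝ) (t : ℕ) (s : S) :
    expect (iterK P (t + 1) s) f = expect (P s) (fun u => expect (iterK P t u) f) :=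
  expect_bind _ _ f

theorem expect_iterK_succ' (f : S → ℝ) (t : ℕ) (s : S) :
    expect (iterK P (t + 1) s) f = expect (iterK P t s) (fun u => expect (P u) f) := by
  rw [← expect_bind]
  exact congrArg (_root_.expect · f) (funext (iterK_succ' P t s))

end Kernel

section Value

variable {S : Type*} [Fintype S] [DecidableEq S] (γ : ℝ) (R Vbar : S → ℝ)

theorem mbValue_succ (Q : S → S → ℝ) (m : ℕ) (s : S) :
    mbValue γ R Vbar Q (m + 1) s = R s + γ * expect (Q s) (mbValue γ R Vbar Q m) := by
  have hV : mbValue γ R Vbar Q m = fun u => ∑ t ∈ range m, γ ^ t * expect (iterK Q t u) R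
      + γ ^ m * expect (iterK Q m u) Vbar := rfl
  simp only [hV, mbValue, expect_add, expect_finsetSum, expect_const_mul, ← expect_iterK_succ,
    sum_range_succ', expect_iterK_zero, mul_add, mul_sum, pow_succ]
  ring_nf

theorem interp_eq (P Phat : S → S → ℝ) {H h : ℕ} (hhH : h ≤ H) (s : S) :
    interp γ R Vbar P Phat H h s = ∑ t ∈ range h, γ ^ t * expect (iterK P t s) R
      + γ ^ h * expect (iterK P h s) (mbValue γ R Vbar Phat (H - h)) := by
  obtain ⟨n, rfl⟩ := Nat.exists_eq_add_of_le hhH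
  have hV : mbValue γ R Vbar Phat n = fun u => ∑ t ∈ range n, γ ^ t * expect (iterK Phat t u) R
      + γ ^ n * expect (iterK Phat n u) Vbar := rfl
  have hU : interp γ R Vbar P Phat (h + n) h s = ∑ t ∈ range h, γ ^ t * expect (iterK P t s) R
      + ∑ t ∈ Ico h (h + n), γ ^ t * expect (iterK P h s) (fun u => expect (iterK Phat (t - h) u) R)
      + γ ^ (h + n) * expect (iterK P h s) (fun u => expect (iterK Phat (h + n - h) u) Vbar) :=
    rfl
  simp only [hU, hV, sum_Ico_eq_sum_range, Nat.add_sub_cancel_left, expect_add, expect_finsetSum,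
    expect_const_mul, mul_add, mul_sum, ← mul_assoc, ← pow_add, add_assoc]

theorem interp_sub_interp_succ (P Phat : S → S → ℝ) {H h : ℕ} (hh : h + 1 ≤ H) (s : S) :
    interp γ R Vbar P Phat H h s - interp γ R Vbar P Phat H (h + 1) s
      = γ ^ (h + 1) * expect (iterK P h s) (fun u =>
          expect (Phat u) (mbValue γ R Vbar Phat (H - h - 1))
            - expect (P u) (mbValue γ R Vbar Phat (H - h - 1))) := by
  obtain ⟨m, rfl⟩ : ∃ m, H = h + 1 + m := ⟨H - (h + 1), by omega⟩
  have hm : h + 1 + m - h = m + 1 := by omega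
  have hV : mbValue γ R Vbar Phat (m + 1) = fun u =>
      R u + γ * expect (Phat u) (mbValue γ R Vbar Phat m) :=
    funext (mbValue_succ γ R Vbar Phat m)
  rw [interp_eq γ R Vbar P Phat (by omega), interp_eq γ R Vbar P Phat le_self_add, hm,
    Nat.add_sub_cancel_left, Nat.add_sub_cancel, hV, sum_range_succ,
    expect_iterK_succ', expect_add, expect_const_mul, expect_sub, pow_succ]
  ring

end Value

section Wasserstein

open scoped NNReal

variable {S : Type*} [Fintype S] [MetricSpace S] {p q : S → ℝ}

theorem wass_self (p : S → ℝ) : wass p p = 0 := by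
  have : Nonempty {f : S → ℝ // LipschitzWith 1 f} := ⟨⟨0, LipschitzWith.const' 0⟩⟩
  simp [wass]

namespace IsDist

theorem expect_sub_expect_le_sum_mul_dist (hp : IsDist p) (hq : IsDist q) (s₀ : S) {g : S → ℝ}
    (hg : LipschitzWith 1 g) :
    expect p g - expect q g ≤ ∑ x, |p x - q x| * dist x s₀ := by
  have hcentered : expect p g - expect q g = ∑ x, (p x - q x) * (g x - g s₀) := by
    simp only [_root_.expect, sub_mul, mul_sub, sum_sub_distrib, ← sum_mul, hp.2, hq.2]
    ring
  rw [hcentered]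
  refine sum_le_sum fun x _ => (le_abs_self _).trans ?_
  rw [abs_mul]
  gcongr
  simpa [Real.dist_eq] using hg.dist_le_mul x s₀

theorem wass_bddAbove (hp : IsDist p) (hq : IsDist q) :
    BddAbove (Set.range fun f : {f : S → ℝ // LipschitzWith 1 f} =>
      expect p f.1 - expect q f.1) := by
  obtain ⟨s₀⟩ := hp.nonempty
  refine ⟨∑ x, |p x - q x| * dist x s₀, ?_⟩
  rintro _ ⟨g, rfl⟩
  exact hp.expect_sub_expect_le_sum_mul_dist hq s₀ g.2

theorem expect_sub_expect_le_wass (hp : IsDist p) (hq : IsDist q) {g : S → ℝ}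
    (hg : LipschitzWith 1 g) : expect p g - expect q g ≤ wass p q :=
  le_ciSup (hp.wass_bddAbove hq) ⟨g, hg⟩

theorem expect_sub_expect_le_mul_wass (hp : IsDist p) (hq : IsDist q) {K : ℝ≥0} {f : S → ℝ}
    (hf : LipschitzWith K f) : expect p f - expect q f ≤ K * wass p q := by
  rcases eq_or_ne K 0 with rfl | hK
  · obtain ⟨s₀⟩ := hp.nonempty
    have hconst : f = fun _ => f s₀ := funext fun x => (LipschitzWith.zero_iff f).1 hf x s₀
    rw [hconst, hp.expect_const, hq.expect_const, sub_self, NNReal.coe_zero, zero_mul]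
  · have hg : LipschitzWith 1 (fun x => (K : ℝ)⁻¹ * f x) := by
      refine LipschitzWith.of_dist_le_mul fun x y => ?_
      rw [Real.dist_eq, ← mul_sub, abs_mul, abs_inv, NNReal.abs_eq, ← Real.dist_eq,
        NNReal.coe_one, one_mul, inv_mul_le_iff₀ (by positivity)]
      exact hf.dist_le_mul x y
    have := hp.expect_sub_expect_le_wass hq hg
    rwa [expect_const_mul, expect_const_mul, ← mul_sub, inv_mul_le_iff₀ (by positivity)] at this

theorem abs_expect_sub_expect_le_mul_wass (hp : IsDist p) (hq : IsDist q) {K : ℝ≥0}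
    {f : S → ℝ} (hf : LipschitzWith K f) : |expect p f - expect q f| ≤ K * wass p q := by
  have hneg := hp.expect_sub_expect_le_mul_wass hq hf.neg
  rw [expect_neg, expect_neg] at hneg
  exact abs_le.2 ⟨by linarith, hp.expect_sub_expect_le_mul_wass hq hf⟩

theorem abs_expect_sub_expect_le_mul_wass_of_abs_sub_le (hp : IsDist p) (hq : IsDist q) {K : ℝ}
    {f : S → ℝ} (hf : ∀ x y, |f x - f y| ≤ K * dist x y) :
    |expect p f - expect q f| ≤ K * wass p q := by
  rcases lt_or_ge K 0 with hK | hK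
  · have : Subsingleton S := ⟨fun x y => by_contra fun hxy =>
      ((abs_nonneg _).trans (hf x y)).not_gt (mul_neg_of_neg_of_pos hK (dist_pos.2 hxy))⟩
    rw [hp.eq_of_subsingleton hq, wass_self, sub_self, abs_zero, mul_zero]
  · exact hp.abs_expect_sub_expect_le_mul_wass hq (K := ⟨K, hK⟩)
      (LipschitzWith.of_dist_le_mul fun x y => hf x y)

end IsDist

end Wasserstein

/-- If the `(H−h−1)`-step model-based value under the approximate kernel is
`K`-Lipschitz, then for `0 ≤ h ≤ H−1`,
`|U_h(s) − U_{h+1}(s)| ≤ K γ^{h+1} E_{s_h∼P_h(s)}[W(P(·|s_h), P̂(·|s_h))]`. -/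
theorem interp_succ_diff_le {S : Type*} [Fintype S] [DecidableEq S] [MetricSpace S]
    (γ : ℝ) (hγ : 0 ≤ γ ∧ γ < 1) (R Vbar : S → ℝ) (P Phat : S → S → ℝ)
    (hP : ∀ s, IsDist (P s)) (hPhat : ∀ s, IsDist (Phat s))
    (K : ℝ) (H h : ℕ) (hh : h + 1 ≤ H)
    (hLip : ∀ s s', |mbValue γ R Vbar Phat (H - h - 1) s - mbValue γ R Vbar Phat (H - h - 1) s'|
      ≤ K * dist s s') (s : S) :
    |interp γ R Vbar P Phat H h s - interp γ R Vbar P Phat H (h+1) s| ≤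
      K * γ ^ (h+1) * expect (iterK P h s) (fun u => wass (P u) (Phat u)) := by
  have hμ := iterK_nonneg hP h s
  have hγ' := pow_nonneg hγ.1 (h + 1)
  rw [interp_sub_interp_succ γ R Vbar P Phat hh s, abs_mul, abs_of_nonneg hγ']
  calc γ ^ (h + 1) * |expect (iterK P h s) (fun u =>
          expect (Phat u) (mbValue γ R Vbar Phat (H - h - 1))
            - expect (P u) (mbValue γ R Vbar Phat (H - h - 1)))|
      ≤ γ ^ (h + 1) * expect (iterK P h s) (fun u => K * wass (P u) (Phat u)) := by
        refine mul_le_mul_of_nonneg_left ?_ hγ'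
        refine (abs_expect_le hμ _).trans (expect_mono hμ fun u => ?_)
        rw [abs_sub_comm]
        exact (hP u).abs_expect_sub_expect_le_mul_wass_of_abs_sub_le (hPhat u) hLip
    _ = K * γ ^ (h + 1) * expect (iterK P h s) (fun u => wass (P u) (Phat u)) := by
        rw [expect_const_mul]
        ring
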